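/- arXiv:1601.07398 — 2 statements merged into one kernel-verified Lean document; each statement's English description precedes it below -/
import Mathlib

section
/- Let C be a subset of ℤ₂ⁿ and let σ be the sum of the elements of C. If σ ≠ 0, then for every vertex u the cubelike graph X(C) has perfect state transfer from u to u + σ at time π/2. If σ = 0, then X(C) is periodic at time π/2. -/
/-!
The adjacency matrix of `X(C)` is `∑ c ∈ C, P c`, where `P c` is the permutation matrix of
translation by `c`. These matrices commute, and each is an involution because every element of
`ℤ₂ⁿ` has order at most two, so `exp (i t P c) = cos t • 1 + i sin t • P c`, which is `i • P c`
at `t = π/2`. Hence `H(π/2) = i ^ |C| • P σ`: a unimodular multiple of the permutation matrix of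
translation by `σ`, which is the identity exactly when `σ = 0`.
-/

open Matrix Complex

/-- Adjacency matrix of the cubelike graph `X(C)` over `ℤ₂ⁿ`:
`x, y` adjacent iff `x + y ∈ C`. -/
noncomputable def cubeAdj {n : ℕ} (C : Set (Fin n → ZMod 2)) :
    Matrix (Fin n → ZMod 2) (Fin n → ZMod 2) ℂ :=
  Matrix.of fun x y => C.indicator (fun _ => (1 : ℂ)) (x + y)

/-- Transition matrix `H(t) = exp(i t A)` of a graph with adjacency matrix `A`. -/
noncomputable def transitionM {V : Type*} [Fintype V] [DecidableEq V]
    (A : Matrix V V ℂ) (t : ℝ) : Matrix V V ℂ :=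
  NormedSpace.exp ((Complex.I * (t : ℂ)) • A)

section Involution
variable {A : Type*} [Ring A] [Algebra ℂ A] [TopologicalSpace A] [IsTopologicalRing A]
  [ContinuousSMul ℂ A] [T2Space A] {P : A}

theorem NormedSpace.exp_smul_of_mul_self_eq_one (z : ℂ) (hP : P * P = 1) :
    NormedSpace.exp (z • P) = cosh z • 1 + sinh z • P := by
  rw [NormedSpace.exp_eq_tsum ℂ]
  refine HasSum.tsum_eq (HasSum.even_add_odd ?_ ?_)
  · convert (hasSum_cosh z).smul_const (1 : A) using 2 with k
    rw [smul_pow, smul_smul, pow_mul P, sq, hP, one_pow, div_eq_inv_mul]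
  · convert (hasSum_sinh z).smul_const P using 2 with k
    rw [smul_pow, smul_smul, pow_succ P, pow_mul P, sq, hP, one_pow, one_mul, div_eq_inv_mul]

theorem NormedSpace.exp_I_mul_pi_div_two_smul_of_mul_self_eq_one (hP : P * P = 1) :
    NormedSpace.exp ((I * ((Real.pi / 2 : ℝ) : ℂ)) • P) = I • P := by
  rw [exp_smul_of_mul_self_eq_one _ hP, mul_comm, cosh_mul_I, sinh_mul_I, ← ofReal_cos,
    ← ofReal_sin, Real.cos_pi_div_two, Real.sin_pi_div_two]
  simp

end Involution

section Translation
variable (R : Type*) {G : Type*} [AddCommGroup G] [DecidableEq G]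

abbrev translationMatrix [Zero R] [One R] (c : G) : Matrix G G R :=
  (Equiv.addRight c).permMatrix R

variable {R}

theorem translationMatrix_zero [Zero R] [One R] : translationMatrix R (0 : G) = 1 := by
  rw [translationMatrix, Equiv.addRight_zero, permMatrix_one]

theorem translationMatrix_apply_add_self [Zero R] [One R] (c u : G) :
    translationMatrix R c u (u + c) = 1 := by
  simp [PEquiv.toMatrix_apply]

variable [Fintype G] [NonAssocSemiring R]

theorem translationMatrix_add (c d : G) :
    translationMatrix R (c + d) = translationMatrix R c * translationMatrix R d := by
  rw [translationMatrix, Equiv.addRight_add, permMatrix_mul]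

theorem translationMatrix_commute (c d : G) :
    Commute (translationMatrix R c) (translationMatrix R d) := by
  rw [Commute, SemiconjBy, ← translationMatrix_add, ← translationMatrix_add, add_comm]

theorem exp_I_mul_pi_div_two_smul_sum_translationMatrix (s : Finset G)
    (hs : ∀ c ∈ s, c + c = 0) :
    NormedSpace.exp ((I * ((Real.pi / 2 : ℝ) : ℂ)) • ∑ c ∈ s, translationMatrix ℂ c)
      = I ^ s.card • translationMatrix ℂ (∑ c ∈ s, c) := by
  induction s using Finset.induction_on with
  | empty => simp [translationMatrix_zero]
  | insert a s ha ih =>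
    have hcomm : Commute ((I * ((Real.pi / 2 : ℝ) : ℂ)) • translationMatrix ℂ a)
        ((I * ((Real.pi / 2 : ℝ) : ℂ)) • ∑ c ∈ s, translationMatrix ℂ c) :=
      ((Commute.sum_right _ _ _ fun c _ ↦ translationMatrix_commute a c).smul_left _).smul_right _
    have hinv : translationMatrix ℂ a * translationMatrix ℂ a = 1 := by
      rw [← translationMatrix_add, hs a (Finset.mem_insert_self a s), translationMatrix_zero]
    rw [Finset.sum_insert ha, smul_add, Matrix.exp_add_of_commute _ _ hcomm,
      NormedSpace.exp_I_mul_pi_div_two_smul_of_mul_self_eq_one hinv,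
      ih fun c hc ↦ hs c (Finset.mem_insert_of_mem hc), smul_mul_smul_comm,
      ← translationMatrix_add, Finset.sum_insert ha, Finset.card_insert_of_notMem ha, pow_succ']

end Translation

theorem neg_eq_self_of_zmod_two {ι : Type*} (x : ι → ZMod 2) : -x = x :=
  funext fun i ↦ ZMod.neg_eq_self_mod_two (x i)

theorem cubeAdj_eq_sum_translationMatrix {n : ℕ} (C : Finset (Fin n → ZMod 2)) :
    cubeAdj (C : Set (Fin n → ZMod 2)) = ∑ c ∈ C, translationMatrix ℂ c := by
  ext x y
  have hxy : ∀ c, x + c = y ↔ c = x + y := fun c ↦ by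
    rw [← eq_neg_add_iff_add_eq, neg_eq_self_of_zmod_two]
  simp [cubeAdj, Matrix.sum_apply, PEquiv.toMatrix_apply, Set.indicator, hxy]

theorem transitionM_cubeAdj_pi_div_two {n : ℕ} (C : Finset (Fin n → ZMod 2)) :
    transitionM (cubeAdj (C : Set (Fin n → ZMod 2))) (Real.pi / 2)
      = I ^ C.card • translationMatrix ℂ (∑ c ∈ C, c) := by
  rw [transitionM, cubeAdj_eq_sum_translationMatrix,
    exp_I_mul_pi_div_two_smul_sum_translationMatrix]
  exact fun c _ ↦ neg_eq_iff_add_eq_zero.mp (neg_eq_self_of_zmod_two c)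

/-- Let `C ⊆ ℤ₂ⁿ` and let `σ` be the sum of the elements of `C`.
If `σ ≠ 0` then for every vertex `u` the cubelike graph `X(C)` has perfect state transfer from
`u` to `u + σ` at time `π/2` (the `(u, u+σ)` entry of `H(π/2)` has unit modulus).
If `σ = 0` then `X(C)` is periodic at `π/2` (`H(π/2) = γ • I` for some unimodular `γ ∈ ℂ`). -/
theorem cubelike_pst_or_periodic {n : ℕ} (C : Finset (Fin n → ZMod 2)) :
    ((∑ u ∈ C, u) ≠ 0 →
      ∀ u : Fin n → ZMod 2,
        ‖
          (transitionM (cubeAdj (↑C : Set (Fin n → ZMod 2))) (Real.pi / 2) u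
            (u + ∑ u ∈ C, u))‖ = 1) ∧
    ((∑ u ∈ C, u) = 0 →
      ∃ γ : ℂ, ‖γ‖ = 1 ∧
        transitionM (cubeAdj (↑C : Set (Fin n → ZMod 2))) (Real.pi / 2) = γ • 1) := by
  rw [transitionM_cubeAdj_pi_div_two]
  refine ⟨fun _ u ↦ ?_, fun hσ ↦ ⟨I ^ C.card, by simp, by rw [hσ, translationMatrix_zero]⟩⟩
  rw [Matrix.smul_apply, translationMatrix_apply_add_self, smul_eq_mul, mul_one, norm_pow, norm_I,
    one_pow]
end

section
/- Let d = 2^{α-2}k where n = 2^α m with α ≥ 2, m > 1 odd, and k | m. Let C = C₁ ∪ C₂ ∪ C₃ ⊆ ℤ₂^α where C₁ = {(0,…,0,1,0), (0,…,0,1,1)}, C₂ = {(0,…,0,0,1)}, C₃ = {(0,…,0,0,0)}. Then ICG_n({d, 2d, 4d}) is isomorphic to the Kronecker product X(C) × Cay(ℤ_m, S_{ℤ_m}(k)); moreover |C| = 4 and the sum of the elements of C is 0. -/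
open Matrix Complex

/-- Adjacency matrix of the Cayley graph `Cay(Γ, S)`: `a, b` adjacent iff `a - b ∈ S`. -/
noncomputable def cayAdj {G : Type*} [AddGroup G] (S : Set G) : Matrix G G ℂ :=
  Matrix.of fun a b => S.indicator (fun _ => (1 : ℂ)) (a - b)

/-- Adjacency matrix of the integral circulant graph `ICG_n(D)` (convention
`gcd(0, n) = n`, so `S_{ℤ_n}(n) = {0}` gives a loop at each vertex). -/
noncomputable def icgAdj (n : ℕ) (D : Set ℕ) : Matrix (ZMod n) (ZMod n) ℂ :=
  cayAdj {x : ZMod n | Nat.gcd x.val n ∈ D}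

/-- The tuple `(0, …, 0, 1, 0) ∈ ℤ₂^α` (`1` in position `α - 2`). -/
def c₁ (α : ℕ) : Fin α → ZMod 2 := fun j => if (j : ℕ) = α - 2 then 1 else 0

/-- The tuple `(0, …, 0, 1, 1) ∈ ℤ₂^α`. -/
def c₂ (α : ℕ) : Fin α → ZMod 2 := fun j => if (j : ℕ) = α - 2 ∨ (j : ℕ) = α - 1 then 1 else 0

/-- The tuple `(0, …, 0, 0, 1) ∈ ℤ₂^α` (`1` in position `α - 1`). -/
def c₃ (α : ℕ) : Fin α → ZMod 2 := fun j => if (j : ℕ) = α - 1 then 1 else 0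

/-- The set `C = C₁ ∪ C₂ ∪ C₃ = {(0,…,0,1,0), (0,…,0,1,1)} ∪ {(0,…,0,0,1)} ∪ {(0,…,0,0,0)}`
of `ℤ₂^α`. -/
def cubeC (α : ℕ) : Finset (Fin α → ZMod 2) := {c₁ α, c₂ α, c₃ α, 0}

/-!
By the Chinese remainder theorem `ℤ_n ≅ ℤ_{2^α} × ℤ_m`, and `gcd(w, n) = gcd(w, 2^α) · gcd(w, m)`
is a power of two times an odd number. Hence `gcd(w, n) ∈ {d, 2d, 4d}` iff `2^{α-2} ∣ w` and
`gcd(w, m) = k`: the connection set is a product, so the Cayley graph is a Kronecker product.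
On the `2`-part, writing residues mod `2^α` in binary turns `a ≡ b [MOD 2^{α-2}]` into "the digit
vectors of `a` and `b` agree in the `α - 2` low positions", i.e. their sum lies in `C`, which is
the set of vectors supported on the two top positions.
-/

lemma cubeAdj_eq_cayAdj {n : ℕ} (C : Set (Fin n → ZMod 2)) : cubeAdj C = cayAdj C := by
  ext x y
  simp only [cubeAdj, cayAdj, of_apply, ZModModule.sub_eq_add]

lemma kroneckerMap_cayAdj {G H : Type*} [AddGroup G] [AddGroup H] (S : Set G) (T : Set H) :
    kroneckerMap (· * ·) (cayAdj S) (cayAdj T) = cayAdj (S ×ˢ T) := by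
  ext ⟨a, b⟩ ⟨c, d⟩
  exact Set.indicator_prod_one.symm

lemma cayAdj_apply_eq_of_sub_mem_iff {G H : Type*} [AddGroup G] [AddGroup H] {S : Set G}
    {T : Set H} {a b : G} {c d : H} (h : a - b ∈ S ↔ c - d ∈ T) :
    cayAdj S a b = cayAdj T c d := by
  by_cases hS : a - b ∈ S
  · simp [cayAdj, hS, h.1 hS]
  · simp [cayAdj, hS, mt h.2 hS]

lemma Nat.factorization_two_pow_mul_odd {i u : ℕ} (hu : Odd u) :
    (2 ^ i * u).factorization 2 = i := by
  simp [Nat.factorization_mul, hu.pos.ne', Nat.factorization_eq_zero_of_not_dvd,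
    ← even_iff_two_dvd, Nat.not_even_iff_odd.mpr hu, Nat.prime_two.factorization_self]

lemma Nat.two_pow_mul_odd_inj {i j u v : ℕ} (hu : Odd u) (hv : Odd v)
    (h : 2 ^ i * u = 2 ^ j * v) : i = j ∧ u = v := by
  have hij : i = j := by
    rw [← Nat.factorization_two_pow_mul_odd (i := i) hu, h, Nat.factorization_two_pow_mul_odd hv]
  subst hij
  exact ⟨rfl, Nat.eq_of_mul_eq_mul_left (by positivity) h⟩

lemma Nat.exists_gcd_two_pow_mul_eq_iff {α s m k w : ℕ} (hs : s ≤ α) (hm : Odd m)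
    (hk : Odd k) :
    (∃ i, s ≤ i ∧ i ≤ α ∧ Nat.gcd w (2 ^ α * m) = 2 ^ i * k) ↔
      2 ^ s ∣ w ∧ Nat.gcd w m = k := by
  obtain ⟨j, hjα, hj⟩ := (Nat.dvd_prime_pow Nat.prime_two).1 (Nat.gcd_dvd_right w (2 ^ α))
  have hsplit : Nat.gcd w (2 ^ α * m) = 2 ^ j * Nat.gcd w m := by
    rw [Nat.Coprime.gcd_mul w (Nat.Coprime.pow_left _ (Nat.coprime_two_left.2 hm)), hj]
  have hdvd : 2 ^ s ∣ w ↔ s ≤ j := by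
    rw [← Nat.pow_dvd_pow_iff_le_right one_lt_two, ← hj, Nat.dvd_gcd_iff,
      and_iff_left (pow_dvd_pow 2 hs)]
  rw [hsplit, hdvd]
  constructor
  · rintro ⟨i, hsi, -, h⟩
    obtain ⟨rfl, rfl⟩ := Nat.two_pow_mul_odd_inj (hm.of_dvd_nat (Nat.gcd_dvd_right w m)) hk h
    exact ⟨hsi, rfl⟩
  · rintro ⟨hsj, rfl⟩
    exact ⟨j, hsj, hjα, rfl⟩

lemma mem_two_pow_multiples_iff (t k g : ℕ) :
    g ∈ ({2 ^ t * k, 2 * (2 ^ t * k), 4 * (2 ^ t * k)} : Set ℕ) ↔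
      ∃ i, t ≤ i ∧ i ≤ t + 2 ∧ g = 2 ^ i * k := by
  simp only [Set.mem_insert_iff, Set.mem_singleton_iff]
  constructor
  · rintro (rfl | rfl | rfl)
    · exact ⟨t, le_rfl, by omega, rfl⟩
    · exact ⟨t + 1, by omega, by omega, by ring⟩
    · exact ⟨t + 2, by omega, le_rfl, by ring⟩
  · rintro ⟨i, hti, hit, rfl⟩
    obtain rfl | rfl | rfl : i = t ∨ i = t + 1 ∨ i = t + 2 := by omega
    · exact Or.inl rfl
    · exact Or.inr (Or.inl (by ring))
    · exact Or.inr (Or.inr (by ring))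

lemma ZMod.chineseRemainder_fst {a b : ℕ} (h : a.Coprime b) (x : ZMod (a * b)) :
    (ZMod.chineseRemainder h x).1 = ZMod.castHom (dvd_mul_right a b) _ x :=
  Prod.fst_zmod_cast x

lemma ZMod.chineseRemainder_snd {a b : ℕ} (h : a.Coprime b) (x : ZMod (a * b)) :
    (ZMod.chineseRemainder h x).2 = ZMod.castHom (dvd_mul_left b a) _ x :=
  Prod.snd_zmod_cast x

lemma ZMod.castHom_eq_zero_iff_dvd_val {n d : ℕ} [NeZero n] (h : d ∣ n) (w : ZMod n) :
    ZMod.castHom h (ZMod d) w = 0 ↔ d ∣ w.val := by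
  rw [ZMod.castHom_apply, ZMod.cast_eq_val, ZMod.natCast_eq_zero_iff]

lemma ZMod.gcd_val_castHom {n d : ℕ} [NeZero n] (h : d ∣ n) (w : ZMod n) :
    Nat.gcd (ZMod.castHom h (ZMod d) w).val d = Nat.gcd w.val d := by
  rw [ZMod.castHom_apply, ZMod.cast_eq_val, ZMod.val_natCast, ← Nat.gcd_rec, Nat.gcd_comm]

lemma ZMod.val_finEquiv_symm (n : ℕ) [NeZero n] (a : ZMod n) :
    ((ZMod.finEquiv n).symm a : ℕ) = a.val := by
  cases n with
  | zero => exact absurd rfl (NeZero.ne 0)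
  | succ n => rfl

noncomputable def binaryDigits (α : ℕ) : ZMod (2 ^ α) ≃ (Fin α → ZMod 2) :=
  (ZMod.finEquiv (2 ^ α)).symm.toEquiv.trans finFunctionFinEquiv.symm

lemma val_binaryDigits_apply (α : ℕ) (a : ZMod (2 ^ α)) (j : Fin α) :
    (binaryDigits α a j).val = a.val / 2 ^ (j : ℕ) % 2 :=
  (finFunctionFinEquiv_symm_apply_val _ j).trans
    (congrArg (· / 2 ^ (j : ℕ) % 2) (ZMod.val_finEquiv_symm _ a))

lemma Nat.mod_two_pow_eq_iff_forall_testBit {x y t : ℕ} :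
    x % 2 ^ t = y % 2 ^ t ↔ ∀ j < t, x.testBit j = y.testBit j := by
  constructor
  · intro h j hj
    simpa [Nat.testBit_mod_two_pow, hj] using congrArg (Nat.testBit · j) h
  · intro h
    refine Nat.eq_of_testBit_eq fun j => ?_
    rw [Nat.testBit_mod_two_pow, Nat.testBit_mod_two_pow]
    by_cases hj : j < t
    · rw [h j hj]
    · simp [hj]

lemma binaryDigits_eq_below_iff {α t : ℕ} (ht : t ≤ α) (a b : ZMod (2 ^ α)) :
    (∀ j : Fin α, (j : ℕ) < t → binaryDigits α a j = binaryDigits α b j) ↔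
      a.val ≡ b.val [MOD 2 ^ t] := by
  have hbit : ∀ j : Fin α, binaryDigits α a j = binaryDigits α b j ↔
      a.val.testBit j = b.val.testBit j := by
    intro j
    rw [← (ZMod.val_injective 2).eq_iff, val_binaryDigits_apply, val_binaryDigits_apply,
      Nat.testBit_eq_decide_div_mod_eq, Nat.testBit_eq_decide_div_mod_eq, decide_eq_decide]
    omega
  rw [Nat.ModEq, Nat.mod_two_pow_eq_iff_forall_testBit]
  exact ⟨fun h j hj => (hbit ⟨j, by omega⟩).1 (h _ hj), fun h j hj => (hbit j).2 (h j hj)⟩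

def embedLastTwo (t : ℕ) : ZMod 2 × ZMod 2 →+ (Fin (t + 2) → ZMod 2) :=
  (AddMonoidHom.single (fun _ => ZMod 2) (Fin.last t).castSucc).coprod
    (AddMonoidHom.single (fun _ => ZMod 2) (Fin.last (t + 1)))

lemma embedLastTwo_apply (t : ℕ) (p : ZMod 2 × ZMod 2) (j : Fin (t + 2)) :
    embedLastTwo t p j = if (j : ℕ) = t then p.1 else if (j : ℕ) = t + 1 then p.2 else 0 := by
  simp only [embedLastTwo, AddMonoidHom.coprod_apply, AddMonoidHom.single_apply, Pi.add_apply,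
    Pi.single_apply, Fin.ext_iff, Fin.val_castSucc, Fin.val_last]
  split_ifs <;> first | omega | simp

lemma embedLastTwo_injective (t : ℕ) : Function.Injective (embedLastTwo t) := fun p q h =>
  Prod.ext (by simpa [embedLastTwo_apply] using congrFun h (Fin.last t).castSucc)
    (by simpa [embedLastTwo_apply] using congrFun h (Fin.last (t + 1)))

lemma cubeC_eq_image_embedLastTwo (t : ℕ) :
    cubeC (t + 2) = Finset.univ.image (embedLastTwo t) := by
  have huniv : (Finset.univ : Finset (ZMod 2 × ZMod 2)) = {(1, 0), (1, 1), (0, 1), (0, 0)} := by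
    decide
  simp only [huniv, cubeC, Finset.image_insert, Finset.image_singleton, Prod.mk_zero_zero,
    map_zero]
  congr 3 <;> funext j <;> simp only [embedLastTwo_apply, c₁, c₂, c₃] <;> split_ifs <;>
    first | omega | rfl

lemma cubeC_card (t : ℕ) : (cubeC (t + 2)).card = 4 := by
  rw [cubeC_eq_image_embedLastTwo, Finset.card_image_of_injective _ (embedLastTwo_injective t)]
  rfl

lemma cubeC_sum (t : ℕ) : ∑ c ∈ cubeC (t + 2), c = 0 := by
  rw [cubeC_eq_image_embedLastTwo, Finset.sum_image fun p _ q _ h => embedLastTwo_injective t h,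
    ← map_sum, show ∑ p : ZMod 2 × ZMod 2, p = 0 by decide, map_zero]

lemma mem_cubeC_iff (t : ℕ) (w : Fin (t + 2) → ZMod 2) :
    w ∈ cubeC (t + 2) ↔ ∀ j : Fin (t + 2), (j : ℕ) < t → w j = 0 := by
  rw [cubeC_eq_image_embedLastTwo, Finset.mem_image]
  constructor
  · rintro ⟨p, -, rfl⟩ j hj
    rw [embedLastTwo_apply, if_neg (by omega), if_neg (by omega)]
  · intro h
    refine ⟨(w (Fin.last t).castSucc, w (Fin.last (t + 1))), Finset.mem_univ _, funext fun j => ?_⟩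
    rw [embedLastTwo_apply]
    split_ifs with h1 h2
    · exact congrArg w (Fin.ext h1.symm)
    · exact congrArg w (Fin.ext h2.symm)
    · exact (h j (by omega)).symm

lemma binaryDigits_sub_mem_cubeC_iff (t : ℕ) (a b : ZMod (2 ^ (t + 2))) :
    binaryDigits (t + 2) a - binaryDigits (t + 2) b ∈ cubeC (t + 2) ↔
      ZMod.castHom (pow_dvd_pow 2 (t.le_add_right 2)) (ZMod (2 ^ t)) (a - b) = 0 := by
  rw [mem_cubeC_iff, map_sub, sub_eq_zero, ZMod.castHom_apply, ZMod.castHom_apply,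
    ZMod.cast_eq_val, ZMod.cast_eq_val, ZMod.natCast_eq_natCast_iff,
    ← binaryDigits_eq_below_iff (t.le_add_right 2)]
  simp only [Pi.sub_apply, sub_eq_zero]

theorem icg_d2d4d_iso_kronecker_general (α m k : ℕ) (hα : 2 ≤ α) (hm : Odd m)
    (hk : k ∣ m) :
    (∃ e : ZMod (2 ^ α * m) ≃ (Fin α → ZMod 2) × ZMod m,
      ∀ x y : ZMod (2 ^ α * m),
        icgAdj (2 ^ α * m) {2 ^ (α - 2) * k, 2 * (2 ^ (α - 2) * k), 4 * (2 ^ (α - 2) * k)}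
            x y =
          Matrix.kroneckerMap (· * ·)
            (cubeAdj (↑(cubeC α) : Set (Fin α → ZMod 2)))
            (cayAdj {z : ZMod m | Nat.gcd z.val m = k})
            (e x) (e y)) ∧
    (cubeC α).card = 4 ∧ ∑ c ∈ cubeC α, c = 0 := by
  obtain ⟨t, rfl⟩ := Nat.exists_eq_add_of_le' hα
  have : NeZero m := ⟨hm.pos.ne'⟩
  have hcop : Nat.Coprime (2 ^ (t + 2)) m := Nat.Coprime.pow_left _ (Nat.coprime_two_left.2 hm)
  set crt := ZMod.chineseRemainder hcop
  refine ⟨⟨crt.toEquiv.trans ((binaryDigits (t + 2)).prodCongr (Equiv.refl _)), fun x y => ?_⟩,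
    cubeC_card t, cubeC_sum t⟩
  rw [cubeAdj_eq_cayAdj, kroneckerMap_cayAdj]
  refine cayAdj_apply_eq_of_sub_mem_iff ?_
  simp only [Set.mem_ofPred_eq, Nat.add_sub_cancel, mem_two_pow_multiples_iff,
    Nat.exists_gcd_two_pow_mul_eq_iff (Nat.le_add_right t 2) hm (hm.of_dvd_nat hk)]
  simp only [Equiv.trans_apply, Equiv.prodCongr_apply, Prod.map, Equiv.refl_apply,
    Prod.mk_sub_mk, Set.mem_prod, Finset.mem_coe, Set.mem_ofPred_eq,
    binaryDigits_sub_mem_cubeC_iff, ← Prod.fst_sub, ← Prod.snd_sub]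
  rw [RingEquiv.toEquiv_eq_coe, RingEquiv.coe_toEquiv, ← map_sub, ZMod.chineseRemainder_fst,
    ZMod.chineseRemainder_snd, ZMod.gcd_val_castHom, ← RingHom.comp_apply, ZMod.castHom_comp,
    ZMod.castHom_eq_zero_iff_dvd_val]

/-- Let `n = 2^α * m` with `α ≥ 2`, `m > 1` odd, `k ∣ m`, and
`d = 2^{α-2} * k`.  With `C = cubeC α` as above, `ICG_n({d, 2d, 4d})` is isomorphic, as a
graph, to the Kronecker product `X(C) × Cay(ℤ_m, S_{ℤ_m}(k))`; moreover `|C| = 4` and the sum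
of the elements of `C` is `0`. -/
theorem icg_d2d4d_iso_kronecker (α m k : ℕ) (hα : 2 ≤ α) (hm1 : 1 < m) (hm : Odd m)
    (hk : k ∣ m) :
    (∃ e : ZMod (2 ^ α * m) ≃ (Fin α → ZMod 2) × ZMod m,
      ∀ x y : ZMod (2 ^ α * m),
        icgAdj (2 ^ α * m) {2 ^ (α - 2) * k, 2 * (2 ^ (α - 2) * k), 4 * (2 ^ (α - 2) * k)}
            x y =
          Matrix.kroneckerMap (· * ·)
            (cubeAdj (↑(cubeC α) : Set (Fin α → ZMod 2)))
            (cayAdj {z : ZMod m | Nat.gcd z.val m = k})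
            (e x) (e y)) ∧
    (cubeC α).card = 4 ∧ ∑ c ∈ cubeC α, c = 0 :=
  icg_d2d4d_iso_kronecker_general α m k hα hm hk
end
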